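/- Let L be an n×n Hermitian positive semidefinite matrix (n ≥ 2) with diagonal entries C(i) = Σ_j d_ij and |L_ij| = d_ij for i ≠ j, where the d_ij ≥ 0 are symmetric with zero diagonal and not all zero. Then ρ(L) ≥ 2W/(n−1), where W = Σ_{i<j} d_ij. -/

import Mathlib

open Matrix
open scoped ComplexOrder

noncomputable def specRad {n : ℕ} (M : Matrix (Fin n) (Fin n) ℂ) : ℝ :=
  sSup ((fun μ => ‖μ‖) '' spectrum ℂ M)

/-!
Let `T = ∑ᵢ C(i) = ∑ᵢⱼ dᵢⱼ = tr L = 2W`. The eigenvalues of the positive semidefinite `L` satisfy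
`0 ≤ λᵢ ≤ ρ(L)`, so `∑ᵢⱼ |Lᵢⱼ|² = tr L² = ∑ᵢ λᵢ² ≤ ρ(L) · tr L = ρ(L) T`. The left-hand side is
`∑ᵢ C(i)² + ∑ᵢⱼ dᵢⱼ²`, and Cauchy–Schwarz, once along each row (which has only `n - 1` possibly
nonzero entries) and once across the rows, gives `T² ≤ (n - 1)(∑ᵢ C(i)² + ∑ᵢⱼ dᵢⱼ²)`.
Hence `T² ≤ (n - 1) ρ(L) T`, i.e. `T ≤ (n - 1) ρ(L)`.
-/

open Finset

lemma sq_sum_le_card_sub_one_mul_sum_sq {ι : Type*} [Fintype ι] [DecidableEq ι]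
    (f : ι → ℝ) {i : ι} (hi : f i = 0) :
    (∑ j, f j) ^ 2 ≤ (Fintype.card ι - 1 : ℝ) * ∑ j, f j ^ 2 := by
  have hsum : ∀ g : ι → ℝ, g i = 0 → ∑ j, g j = ∑ j ∈ univ.erase i, g j := fun g hg => by
    rw [← add_sum_erase _ _ (mem_univ i), hg, zero_add]
  have hcard : ((univ.erase i).card : ℝ) = Fintype.card ι - 1 := by
    have : Nonempty ι := ⟨i⟩
    rw [card_erase_of_mem (mem_univ i), card_univ, Nat.cast_pred Fintype.card_pos]
  rw [hsum f hi, hsum (f · ^ 2) (by simp [hi]), ← hcard]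
  exact sq_sum_le_card_mul_sum_sq

lemma sq_sum_sum_le_card_sub_one_mul {ι : Type*} [Fintype ι] [DecidableEq ι]
    (d : ι → ι → ℝ) (hd0 : ∀ i, d i i = 0) :
    (∑ i, ∑ j, d i j) ^ 2 ≤
      (Fintype.card ι - 1 : ℝ) * (∑ i, (∑ j, d i j) ^ 2 + ∑ i, ∑ j, d i j ^ 2) := by
  have hrows : ∑ i, (∑ j, d i j) ^ 2 ≤ (Fintype.card ι - 1 : ℝ) * ∑ i, ∑ j, d i j ^ 2 := by
    rw [mul_sum]
    exact sum_le_sum fun i _ => sq_sum_le_card_sub_one_mul_sum_sq (d i) (hd0 i)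
  have htotal : (∑ i, ∑ j, d i j) ^ 2 ≤ Fintype.card ι * ∑ i, (∑ j, d i j) ^ 2 := by
    simpa using sq_sum_le_card_mul_sum_sq (s := univ) (f := fun i => ∑ j, d i j)
  linarith

lemma sum_sum_eq_two_mul_sum_filter_lt {ι : Type*} [Fintype ι] [LinearOrder ι]
    (d : ι → ι → ℝ) (hd0 : ∀ i, d i i = 0) (hsymm : ∀ i j, d i j = d j i) :
    ∑ i, ∑ j, d i j = 2 * ∑ i, ∑ j ∈ univ.filter (fun j => i < j), d i j := by
  have hsplit : ∀ i j, d i j = (if i < j then d i j else 0) + (if j < i then d j i else 0) := by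
    intro i j
    rcases lt_trichotomy i j with h | rfl | h
    · simp [h, h.not_gt]
    · simp [hd0]
    · simp [h, h.not_gt, hsymm i j]
  simp_rw [sum_filter]
  calc ∑ i, ∑ j, d i j
      = ∑ i, ∑ j, (if i < j then d i j else 0) + ∑ i, ∑ j, (if j < i then d j i else 0) := by
        rw [← sum_add_distrib]
        refine sum_congr rfl fun i _ => ?_
        rw [← sum_add_distrib]
        exact sum_congr rfl fun j _ => hsplit i j
    _ = 2 * ∑ i, ∑ j, (if i < j then d i j else 0) := by
        rw [sum_comm (f := fun i j => if j < i then d j i else 0)]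
        ring

namespace Matrix

variable {𝕜 ι : Type*} [RCLike 𝕜] [Fintype ι] {A : Matrix ι ι 𝕜}

lemma IsHermitian.trace_mul_self_eq_sum_norm_sq (hA : A.IsHermitian) :
    (A * A).trace = ∑ i, ∑ j, ((‖A i j‖ ^ 2 : ℝ) : 𝕜) := by
  simp only [trace, diag_apply, mul_apply]
  refine sum_congr rfl fun i _ => sum_congr rfl fun j _ => ?_
  rw [← hA.apply j i, RCLike.ofReal_pow, ← RCLike.mul_conj]
  rfl

lemma IsHermitian.trace_mul_self_eq_sum_eigenvalues_sq [DecidableEq ι] (hA : A.IsHermitian) :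
    (A * A).trace = ∑ i, ((hA.eigenvalues i ^ 2 : ℝ) : 𝕜) := by
  conv_lhs => rw [hA.spectral_theorem, ← map_mul]
  rw [Unitary.conjStarAlgAut_apply, trace_mul_cycle,
    Unitary.coe_star_mul_self, one_mul, diagonal_mul_diagonal, trace_diagonal]
  simp [sq]

lemma IsHermitian.sum_norm_sq_eq_sum_eigenvalues_sq [DecidableEq ι] (hA : A.IsHermitian) :
    ∑ i, ∑ j, ‖A i j‖ ^ 2 = ∑ i, hA.eigenvalues i ^ 2 := by
  have h := hA.trace_mul_self_eq_sum_norm_sq.symm.trans hA.trace_mul_self_eq_sum_eigenvalues_sq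
  exact_mod_cast h

end Matrix

lemma specRad_nonneg {n : ℕ} (M : Matrix (Fin n) (Fin n) ℂ) : 0 ≤ specRad M :=
  Real.sSup_nonneg <| by rintro _ ⟨μ, -, rfl⟩; exact norm_nonneg μ

lemma norm_le_specRad {n : ℕ} {M : Matrix (Fin n) (Fin n) ℂ} {μ : ℂ} (hμ : μ ∈ spectrum ℂ M) :
    ‖μ‖ ≤ specRad M :=
  le_csSup (M.finite_spectrum.image _).bddAbove ⟨μ, hμ, rfl⟩

lemma Matrix.IsHermitian.eigenvalues_le_specRad {n : ℕ} {A : Matrix (Fin n) (Fin n) ℂ}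
    (hA : A.IsHermitian) (i : Fin n) : hA.eigenvalues i ≤ specRad A := by
  have hmem : ((hA.eigenvalues i : ℝ) : ℂ) ∈ spectrum ℂ A :=
    (spectrum.algebraMap_mem_iff ℂ).2 (hA.eigenvalues_mem_spectrum_real i)
  exact (Complex.norm_real _ ▸ norm_le_specRad hmem).trans' (Real.le_norm_self _)

lemma Matrix.PosSemidef.sum_norm_sq_le_specRad_mul_re_trace {n : ℕ}
    {A : Matrix (Fin n) (Fin n) ℂ} (hA : A.PosSemidef) :
    ∑ i, ∑ j, ‖A i j‖ ^ 2 ≤ specRad A * A.trace.re := by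
  have hA' := hA.isHermitian
  rw [hA'.sum_norm_sq_eq_sum_eigenvalues_sq, hA'.trace_eq_sum_eigenvalues, Complex.re_sum, mul_sum]
  refine sum_le_sum fun i _ => ?_
  change _ ≤ _ * hA'.eigenvalues i
  rw [sq]
  exact mul_le_mul_of_nonneg_right (hA'.eigenvalues_le_specRad i) (hA.eigenvalues_nonneg i)

theorem stmt_13_general {n : ℕ} (hn : 2 ≤ n)
    (L : Matrix (Fin n) (Fin n) ℂ) (hL : L.PosSemidef)
    (d : Fin n → Fin n → ℝ) (hd0 : ∀ i, d i i = 0)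
    (hdsymm : ∀ i j, d i j = d j i)
    (habs : ∀ i j, i ≠ j → ‖L i j‖ = d i j)
    (hdiag : ∀ i, L i i = ((∑ j, d i j : ℝ) : ℂ))
    (W : ℝ)
    (hW : W = ∑ i, ∑ j ∈ Finset.univ.filter (fun j => i < j), d i j) :
    2 * W / ((n : ℝ) - 1) ≤ specRad L := by
  have hT : ∑ i, ∑ j, d i j = 2 * W := hW ▸ sum_sum_eq_two_mul_sum_filter_lt d hd0 hdsymm
  have htrace : L.trace.re = ∑ i, ∑ j, d i j := by
    simp only [trace, diag_apply, hdiag, Complex.re_sum, Complex.ofReal_re]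
  have hrow : ∀ i, ∑ j, ‖L i j‖ ^ 2 = (∑ j, d i j) ^ 2 + ∑ j, d i j ^ 2 := fun i => by
    rw [← add_sum_erase _ _ (mem_univ i), ← add_sum_erase univ (fun j => d i j ^ 2) (mem_univ i),
      hdiag, Complex.norm_real, Real.norm_eq_abs, sq_abs, hd0, zero_pow two_ne_zero, zero_add]
    exact congrArg _ <| sum_congr rfl fun j hj => by rw [habs i j (ne_of_mem_erase hj).symm]
  have hρ := hL.sum_norm_sq_le_specRad_mul_re_trace
  rw [sum_congr rfl fun i _ => hrow i, sum_add_distrib, htrace] at hρ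
  have hCS := sq_sum_sum_le_card_sub_one_mul d hd0
  rw [Fintype.card_fin] at hCS
  have hn1 : (0 : ℝ) < n - 1 := by
    have : (2 : ℝ) ≤ n := by exact_mod_cast hn
    linarith
  have hkey : (∑ i, ∑ j, d i j) ^ 2 ≤ ((n - 1) * specRad L) * ∑ i, ∑ j, d i j :=
    hCS.trans (mul_assoc (n - 1 : ℝ) _ _ ▸ mul_le_mul_of_nonneg_left hρ hn1.le)
  rw [div_le_iff₀ hn1, ← hT, mul_comm]
  nlinarith [mul_nonneg hn1.le (specRad_nonneg L)]

/-- Wiener-index lower bound: `ρ(L) ≥ 2W/(n−1)` for a gain distance Laplacian. -/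
theorem stmt_13 {n : ℕ} (hn : 2 ≤ n)
    (L : Matrix (Fin n) (Fin n) ℂ) (hL : L.PosSemidef)
    (d : Fin n → Fin n → ℝ) (hd0 : ∀ i, d i i = 0)
    (hdsymm : ∀ i j, d i j = d j i) (hdnn : ∀ i j, 0 ≤ d i j)
    (hdne : d ≠ fun _ _ => 0)
    (habs : ∀ i j, i ≠ j → ‖L i j‖ = d i j)
    (hdiag : ∀ i, L i i = ((∑ j, d i j : ℝ) : ℂ))
    (W : ℝ)
    (hW : W = ∑ i, ∑ j ∈ Finset.univ.filter (fun j => i < j), d i j) :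
    2 * W / ((n : ℝ) - 1) ≤ specRad L :=
  stmt_13_general hn L hL d hd0 hdsymm habs hdiag W hW
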